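/- Write P = Σᵢ₌₁³ aᵢσᵢ with aᵢ ∈ ℂ and T = Σᵢ₌₀³ cᵢτᵢ with cᵢ ∈ ℝ, where τᵢ = τ₀∘σᵢ (σ₀ = I). Let f = (Re a₁, Re a₂, Re a₃), b = (Im a₁, Im a₂, Im a₃), c = (c₁, c₂, c₃) ∈ ℝ³. Then PT = TP (as maps on ℂ²) if and only if c₀ f + b × c = 0 and f · c = 0. -/

import Mathlib

open Matrix Complex

noncomputable def pauli : Fin 3 → Matrix (Fin 2) (Fin 2) ℂ :=
  ![!![0, 1; 1, 0], !![0, -I; I, 0], !![1, 0; 0, -1]]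

/-- The antilinear map `τ₀(x₁, x₂) = (-x̄₂, x̄₁)`. -/
noncomputable def tau0 (x : Fin 2 → ℂ) : Fin 2 → ℂ :=
  ![-(starRingEnd ℂ (x 1)), starRingEnd ℂ (x 0)]

/-- `τᵢ` for `i = 0, 1, 2, 3`: `τ₀` and `τᵢ = τ₀ ∘ σᵢ`. -/
noncomputable def tau : Fin 4 → (Fin 2 → ℂ) → (Fin 2 → ℂ)
  | 0 => tau0
  | 1 => fun x => tau0 ((pauli 0).mulVec x)
  | 2 => fun x => tau0 ((pauli 1).mulVec x)
  | 3 => fun x => tau0 ((pauli 2).mulVec x)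


/-!
The map `T` is `x ↦ τ₀ (C x)` with `C = c₀ + c · σ`, and `τ₀` is antilinear and anticommutes with
every `σₖ`; hence `P τ₀ = τ₀ P'` with `P' = -(ā · σ)`, and `PT = TP` becomes the matrix identity
`C P = P' C`. By the product rule `(u · σ)(v · σ) = (u · v) + i (u × v) · σ`,
`C P - P' C = 2 ((f · c) + (c₀ f + b × c) · σ)`, which vanishes iff both coefficients do because
`1, σ₁, σ₂, σ₃` are linearly independent.
-/

noncomputable def pauliVec : (Fin 3 → ℂ) →ₗ[ℂ] Matrix (Fin 2) (Fin 2) ℂ :=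
  Fintype.linearCombination ℂ pauli

lemma pauliVec_apply (u : Fin 3 → ℂ) : pauliVec u = ∑ i, u i • pauli i :=
  Fintype.linearCombination_apply ℂ pauli u

lemma pauliVec_eq (u : Fin 3 → ℂ) :
    pauliVec u = !![u 2, u 0 - I * u 1; u 0 + I * u 1, -u 2] := by
  rw [pauliVec_apply]
  ext i j
  fin_cases i <;> fin_cases j <;> simp [Fin.sum_univ_three, pauli] <;> ring

lemma pauliVec_mul_pauliVec (u v : Fin 3 → ℂ) :
    pauliVec u * pauliVec v = (u ⬝ᵥ v) • 1 + I • pauliVec (u ⨯₃ v) := by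
  simp only [pauliVec_eq]
  ext i j
  fin_cases i <;> fin_cases j <;>
    simp [Matrix.mul_apply, Fin.sum_univ_two, Fin.sum_univ_three, dotProduct, cross_apply] <;>
    ring_nf <;> simp only [I_sq] <;> ring

lemma smul_one_add_pauliVec_eq_zero_iff (z : ℂ) (u : Fin 3 → ℂ) :
    z • 1 + pauliVec u = 0 ↔ z = 0 ∧ u = 0 := by
  refine ⟨fun h => ?_, fun ⟨hz, hu⟩ => by simp [hz, hu]⟩
  rw [pauliVec_eq] at h
  have h00 : z + u 2 = 0 := by simpa using congrFun₂ h 0 0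
  have h11 : z - u 2 = 0 := by simpa [sub_eq_add_neg] using congrFun₂ h 1 1
  have h01 : u 0 - I * u 1 = 0 := by simpa using congrFun₂ h 0 1
  have h10 : u 0 + I * u 1 = 0 := by simpa using congrFun₂ h 1 0
  have hz : z = 0 := by linear_combination (h00 + h11) / 2
  have h0 : u 0 = 0 := by linear_combination (h01 + h10) / 2
  have h1 : u 1 = 0 := by linear_combination I * (h01 - h10) / 2 + u 1 * I_sq
  have h2 : u 2 = 0 := by linear_combination (h00 - h11) / 2
  refine ⟨hz, funext fun i => ?_⟩
  fin_cases i <;> assumption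

lemma tau0_tau0 (x : Fin 2 → ℂ) : tau0 (tau0 x) = -x := by
  funext j
  fin_cases j <;> simp [tau0]

lemma tau0_injective : Function.Injective tau0 := fun x y h => by
  rw [← neg_inj, ← tau0_tau0, ← tau0_tau0, h]

lemma pauliVec_mulVec_tau0 (u : Fin 3 → ℂ) (y : Fin 2 → ℂ) :
    pauliVec u *ᵥ tau0 y = tau0 (pauliVec (-star u) *ᵥ y) := by
  simp only [pauliVec_eq]
  funext j
  fin_cases j <;> simp [tau0, mulVec, dotProduct, Fin.sum_univ_two] <;> ring

lemma sum_smul_tau (c : Fin 4 → ℝ) (x : Fin 2 → ℂ) :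
    ∑ i : Fin 4, (c i : ℂ) • tau i x
      = tau0 (((c 0 : ℂ) • 1 + pauliVec (fun i : Fin 3 => (c i.succ : ℂ))) *ᵥ x) := by
  simp only [pauliVec_eq]
  funext j
  fin_cases j <;>
    simp [Fin.sum_univ_four, tau, tau0, pauli, mulVec, dotProduct, Fin.sum_univ_two] <;> ring

lemma smul_one_add_pauliVec_mul_sub_mul (u : Fin 3 → ℂ) (c₀ : ℝ) (v : Fin 3 → ℝ) :
    ((c₀ : ℂ) • 1 + pauliVec (fun i => (v i : ℂ))) * pauliVec u
        - pauliVec (-star u) * ((c₀ : ℂ) • 1 + pauliVec (fun i => (v i : ℂ)))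
      = (2 : ℂ) • ((((fun i => (u i).re) ⬝ᵥ v : ℝ) : ℂ) • 1 + pauliVec
          (fun i => ((c₀ • (fun i => (u i).re) + (fun i => (u i).im) ⨯₃ v) i : ℂ))) := by
  set v' : Fin 3 → ℂ := fun i => (v i : ℂ)
  have hscalar : v' ⬝ᵥ u - -star u ⬝ᵥ v' = 2 * (((fun i => (u i).re) ⬝ᵥ v : ℝ) : ℂ) := by
    simp [v', dotProduct, Fin.sum_univ_three, Complex.ext_iff]
    constructor <;> ring
  have hvector : (c₀ : ℂ) • u - (c₀ : ℂ) • -star u + I • (v' ⨯₃ u) - I • (-star u ⨯₃ v')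
      = (2 : ℂ) • fun i => ((c₀ • (fun i => (u i).re) + (fun i => (u i).im) ⨯₃ v) i : ℂ) := by
    funext i
    simp only [Pi.add_apply, Pi.sub_apply, Pi.smul_apply, Pi.neg_apply, Pi.star_apply]
    fin_cases i <;> simp [v', cross_apply, Complex.ext_iff] <;> constructor <;> ring
  calc _ = (v' ⬝ᵥ u - -star u ⬝ᵥ v') • 1 + pauliVec ((c₀ : ℂ) • u - (c₀ : ℂ) • -star u
          + I • (v' ⨯₃ u) - I • (-star u ⨯₃ v')) := by
        simp only [add_mul, mul_add, smul_mul_assoc, mul_smul_comm, one_mul, mul_one,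
          pauliVec_mul_pauliVec, map_add, map_sub, map_smul]
        module
    _ = _ := by rw [hscalar, hvector, map_smul, smul_add, mul_smul]

theorem stmt9 (a : Fin 3 → ℂ) (c : Fin 4 → ℝ)
    (P : Matrix (Fin 2) (Fin 2) ℂ) (hP : P = ∑ i : Fin 3, a i • pauli i)
    (T : (Fin 2 → ℂ) → (Fin 2 → ℂ)) (hT : ∀ x, T x = ∑ i : Fin 4, (c i : ℂ) • tau i x)
    (f b ctil : Fin 3 → ℝ)
    (hf : f = fun i => (a i).re) (hb : b = fun i => (a i).im)
    (hc : ctil = fun i : Fin 3 => c i.succ) :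
    (∀ x, P.mulVec (T x) = T (P.mulVec x)) ↔
      (c 0 • f + crossProduct b ctil = 0 ∧ f ⬝ᵥ ctil = 0) := by
  subst hP hf hb hc
  simp only [hT, sum_smul_tau, ← pauliVec_apply, pauliVec_mulVec_tau0, mulVec_mulVec,
    tau0_injective.eq_iff, ← ext_iff_mulVec]
  rw [eq_comm, ← sub_eq_zero, smul_one_add_pauliVec_mul_sub_mul, smul_eq_zero,
    smul_one_add_pauliVec_eq_zero_iff]
  simp only [two_ne_zero, false_or, ofReal_eq_zero, funext_iff, Pi.zero_apply, and_comm]
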